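/- arXiv:2310.05083 — 2 statements merged into one kernel-verified Lean document; each statement's English description precedes it below -/
import Mathlib

section
/- (Neyman–Pearson lemma, strict power gain) With P₀, P₁ densities p₀, p₁ w.r.t. μ and R = {x : p₀(x) < k·p₁(x)} for k > 0: if R' is a measurable set with P₀(R') ≤ P₀(R) and μ((R \ R') ∩ {p₁ > 0, p₀ < k·p₁}) > 0, then P₁(R') < P₁(R). -/
/-! Since `p₀ < k p₁` on `R \ R'` and `k p₁ ≤ p₀` on `R' \ R`,
`k P₁(R' \ R) ≤ P₀(R' \ R) ≤ P₀(R \ R') < k P₁(R \ R')`: the middle inequality is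
`P₀ R' ≤ P₀ R` with the common part `R ∩ R'` cancelled, and the last one is strict because
`μ (R \ R') > 0`. Dividing by `k` and adding back `P₁ (R ∩ R')` gives `P₁ R' < P₁ R`. -/

open MeasureTheory Set

section SymmetricDifference

variable {α : Type*} [MeasurableSpace α] {ν : Measure α} [IsFiniteMeasure ν] {s t : Set α}

theorem measure_le_iff_measure_sdiff_le (hs : MeasurableSet s) (ht : MeasurableSet t) :
    ν s ≤ ν t ↔ ν (s \ t) ≤ ν (t \ s) := by
  rw [← measure_inter_add_sdiff s ht, ← measure_inter_add_sdiff t hs, inter_comm t s,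
    ENNReal.add_le_add_iff_left (measure_ne_top ν _)]

theorem measure_lt_iff_measure_sdiff_lt (hs : MeasurableSet s) (ht : MeasurableSet t) :
    ν s < ν t ↔ ν (s \ t) < ν (t \ s) := by
  rw [← measure_inter_add_sdiff s ht, ← measure_inter_add_sdiff t hs, inter_comm t s,
    ENNReal.add_lt_add_iff_left (measure_ne_top ν _)]

end SymmetricDifference

section LikelihoodRatio

variable {α : Type*} [MeasurableSpace α] {μ : Measure α} {f g : α → ENNReal} {k : ENNReal}
  {s : Set α}

theorem withDensity_apply_lt_const_mul (hg : Measurable g) (hs : MeasurableSet s)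
    (hμs : μ s ≠ 0) (hfs : μ.withDensity f s ≠ ⊤) (hlt : ∀ x ∈ s, f x < k * g x) :
    μ.withDensity f s < k * μ.withDensity g s := by
  rw [withDensity_apply _ hs] at hfs ⊢
  rw [withDensity_apply _ hs, ← lintegral_const_mul k hg]
  exact setLIntegral_strict_mono hs hμs (hg.const_mul k) hfs (ae_of_all _ hlt)

theorem const_mul_withDensity_apply_le (hg : Measurable g) (hs : MeasurableSet s)
    (hle : ∀ x ∈ s, k * g x ≤ f x) :
    k * μ.withDensity g s ≤ μ.withDensity f s := by
  rw [withDensity_apply _ hs, withDensity_apply _ hs, ← lintegral_const_mul k hg]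
  exact setLIntegral_mono' hs hle

end LikelihoodRatio

theorem stmt_4_general {α : Type*} [MeasurableSpace α] (μ : Measure α)
    (p₀ p₁ : α → ENNReal) (hp₀ : Measurable p₀) (hp₁ : Measurable p₁)
    (P₀ P₁ : Measure α) (hP₀ : P₀ = μ.withDensity p₀) (hP₁ : P₁ = μ.withDensity p₁)
    [IsProbabilityMeasure P₀] [IsProbabilityMeasure P₁]
    (k : ENNReal) (hk : 0 < k) (hk' : k ≠ ⊤)
    (R : Set α) (hR : R = {x | p₀ x < k * p₁ x})
    (R' : Set α) (hR' : MeasurableSet R') (hle : P₀ R' ≤ P₀ R)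
    (hpos : 0 < μ ((R \ R') ∩ {x | 0 < p₁ x ∧ p₀ x < k * p₁ x})) :
    P₁ R' < P₁ R := by
  subst hP₀ hP₁
  have hRm : MeasurableSet R := hR ▸ measurableSet_lt hp₀ (hp₁.const_mul k)
  have hgain : μ.withDensity p₀ (R \ R') < k * μ.withDensity p₁ (R \ R') :=
    withDensity_apply_lt_const_mul hp₁ (hRm.diff hR')
      (hpos.trans_le (measure_mono inter_subset_left)).ne' (measure_ne_top _ _)
      fun x hx => by simpa [hR] using hx.1
  have hloss : k * μ.withDensity p₁ (R' \ R) ≤ μ.withDensity p₀ (R' \ R) :=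
    const_mul_withDensity_apply_le hp₁ (hR'.diff hRm) fun x hx => by simpa [hR] using hx.2
  have hsize := (measure_le_iff_measure_sdiff_le hR' hRm).mp hle
  rw [measure_lt_iff_measure_sdiff_lt hR' hRm]
  exact (ENNReal.mul_lt_mul_iff_right hk.ne' hk').mp (hloss.trans_lt (hsize.trans_lt hgain))

theorem stmt_4 {α : Type*} [MeasurableSpace α] (μ : Measure α) [SigmaFinite μ]
    (p₀ p₁ : α → ENNReal) (hp₀ : Measurable p₀) (hp₁ : Measurable p₁)
    (P₀ P₁ : Measure α) (hP₀ : P₀ = μ.withDensity p₀) (hP₁ : P₁ = μ.withDensity p₁)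
    [IsProbabilityMeasure P₀] [IsProbabilityMeasure P₁]
    (k : ENNReal) (hk : 0 < k) (hk' : k ≠ ⊤)
    (R : Set α) (hR : R = {x | p₀ x < k * p₁ x})
    (R' : Set α) (hR' : MeasurableSet R') (hle : P₀ R' ≤ P₀ R)
    (hpos : 0 < μ ((R \ R') ∩ {x | 0 < p₁ x ∧ p₀ x < k * p₁ x})) :
    P₁ R' < P₁ R :=
  stmt_4_general μ p₀ p₁ hp₀ hp₁ P₀ P₁ hP₀ hP₁ k hk hk' R hR R' hR' hle hpos
end

section
/- (Optimality of the likelihood ratio for AUROC, discrete case) Let Ω be a finite set, p_in and p_out probability mass functions on Ω with p_in > 0. Among all score functions S : Ω → ℝ, the score L(x) = p_out(x)/p_in(x) maximizes P(S(X_out) > S(X_in)) + ½·P(S(X_out) = S(X_in)), where X_in ∼ p_in and X_out ∼ p_out are independent. -/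
open Finset

/-
Pair the terms of the AUROC double sum for `(x, y)` and `(y, x)`. Writing
`a = p_out x * p_in y` and `b = p_out y * p_in x`, the pair contributes `a * w + b * (1 - w)`,
where `w ∈ [0, 1]` is the score of `S x` against `S y`. This is maximised by `w = 1` when
`b < a` and `w = 0` when `a < b`, and the likelihood ratio makes exactly these choices, since
`a < b ↔ L x < L y`.
-/

/-- The AUROC (with ties counted half) of a score `S` for detecting samples from `p_out`
against `p_in`, for independent `X_out ∼ p_out` and `X_in ∼ p_in` on a finite space. -/
noncomputable def auroc {Ω : Type*} [Fintype Ω] (p_in p_out : Ω → ℝ) (S : Ω → ℝ) : ℝ :=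
  ∑ x : Ω, ∑ y : Ω, p_out x * p_in y *
    ((if S y < S x then (1 : ℝ) else 0) + (1 / 2) * (if S x = S y then (1 : ℝ) else 0))

noncomputable def winScore (s t : ℝ) : ℝ :=
  (if t < s then (1 : ℝ) else 0) + (1 / 2) * (if s = t then (1 : ℝ) else 0)

lemma winScore_nonneg (s t : ℝ) : 0 ≤ winScore s t := by
  unfold winScore; split <;> split <;> norm_num

lemma winScore_add_winScore (s t : ℝ) : winScore s t + winScore t s = 1 := by
  unfold winScore
  rcases lt_trichotomy s t with h | rfl | h
  · simp [h, asymm h, h.ne, h.ne']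
  · norm_num
  · simp [h, asymm h, h.ne, h.ne']

lemma winScore_le_one (s t : ℝ) : winScore s t ≤ 1 := by
  linarith [winScore_add_winScore s t, winScore_nonneg t s]

lemma winScore_eq_one {s t : ℝ} (h : t < s) : winScore s t = 1 := by
  simp [winScore, h, h.ne']

lemma winScore_eq_zero {s t : ℝ} (h : s < t) : winScore s t = 0 := by
  simp [winScore, asymm h, h.ne]

lemma pair_winScore_le {a b s s' t t' : ℝ} (hab : a < b → t < t') (hba : b < a → t' < t) :
    a * winScore s s' + b * winScore s' s ≤ a * winScore t t' + b * winScore t' t := by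
  rw [← sub_eq_of_eq_add' (winScore_add_winScore s s').symm,
    ← sub_eq_of_eq_add' (winScore_add_winScore t t').symm]
  have hw₀ := winScore_nonneg s s'
  have hw₁ := winScore_le_one s s'
  rcases lt_trichotomy a b with h | rfl | h
  · rw [winScore_eq_zero (hab h)]; nlinarith
  · linarith
  · rw [winScore_eq_one (hba h)]; nlinarith

section

variable {Ω : Type*} [Fintype Ω] (p_in p_out : Ω → ℝ)

lemma two_mul_auroc (T : Ω → ℝ) :
    2 * auroc p_in p_out T = ∑ x : Ω, ∑ y : Ω,
      (p_out x * p_in y * winScore (T x) (T y) + p_out y * p_in x * winScore (T y) (T x)) := by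
  simp only [sum_add_distrib]
  rw [two_mul, sum_comm (f := fun x y => p_out y * p_in x * winScore (T y) (T x))]
  rfl

/-- `hT` says `p_out x / p_in x < p_out y / p_in y → T x < T y`, cross-multiplied. -/
theorem auroc_le_of_orders_like_likelihoodRatio {T : Ω → ℝ}
    (hT : ∀ x y, p_out x * p_in y < p_out y * p_in x → T x < T y) (S : Ω → ℝ) :
    auroc p_in p_out S ≤ auroc p_in p_out T := by
  have hpair : ∀ x y, p_out x * p_in y * winScore (S x) (S y)
      + p_out y * p_in x * winScore (S y) (S x)
      ≤ p_out x * p_in y * winScore (T x) (T y) + p_out y * p_in x * winScore (T y) (T x) :=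
    fun x y => pair_winScore_le (hT x y) (hT y x)
  have h2 : 2 * auroc p_in p_out S ≤ 2 * auroc p_in p_out T := by
    rw [two_mul_auroc, two_mul_auroc]
    exact sum_le_sum fun x _ => sum_le_sum fun y _ => hpair x y
  linarith

end

theorem stmt_15_general {Ω : Type*} [Fintype Ω] (p_in p_out : Ω → ℝ)
    (hin_pos : ∀ x, 0 < p_in x)
    (L : Ω → ℝ) (hL : ∀ x, L x = p_out x / p_in x) :
    ∀ S : Ω → ℝ, auroc p_in p_out S ≤ auroc p_in p_out L := by
  refine auroc_le_of_orders_like_likelihoodRatio p_in p_out fun x y h => ?_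
  rwa [hL, hL, div_lt_div_iff₀ (hin_pos x) (hin_pos y)]

theorem stmt_15 {Ω : Type*} [Fintype Ω] (p_in p_out : Ω → ℝ)
    (hin_pos : ∀ x, 0 < p_in x) (hout_nonneg : ∀ x, 0 ≤ p_out x)
    (hin_sum : ∑ x : Ω, p_in x = 1) (hout_sum : ∑ x : Ω, p_out x = 1)
    (L : Ω → ℝ) (hL : ∀ x, L x = p_out x / p_in x) :
    ∀ S : Ω → ℝ, auroc p_in p_out S ≤ auroc p_in p_out L :=
  stmt_15_general p_in p_out hin_pos L hL
end
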